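/- Let (T, ⊗) be a tensor triangulated category. The poset L(T, ⊗) of equivalence classes of objects under X ≈ Y iff ⟨X⟩ = ⟨Y⟩, ordered by inclusion of generated radical thick tensor ideals, is a bounded distributive lattice with join ⟨X⟩ ∨ ⟨Y⟩ = ⟨X ⊕ Y⟩ and meet ⟨X⟩ ∧ ⟨Y⟩ = ⟨X ⊗ Y⟩. -/
import Mathlib


open CategoryTheory CategoryTheory.Limits CategoryTheory.Pretriangulated
  CategoryTheory.MonoidalCategory

variable (C : Type*) [Category C] [HasZeroObject C] [HasShift C ℤ] [Preadditive C]
  [∀ n : ℤ, (CategoryTheory.shiftFunctor C n).Additive] [Pretriangulated C]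
  [HasBinaryBiproducts C] [MonoidalCategory C]
  -- the monoidal structure is exact (triangulated) in each variable:
  [∀ X : C, (tensorLeft X).CommShift ℤ] [∀ X : C, (tensorLeft X).IsTriangulated]
  [∀ X : C, (tensorRight X).CommShift ℤ] [∀ X : C, (tensorRight X).IsTriangulated]

/-- A thick subcategory of the triangulated category `C`, given by its class of objects. -/
def IsThick (S : Set C) : Prop :=
  (∀ X : C, IsZero X → X ∈ S) ∧
  (∀ X Y : C, (X ≅ Y) → X ∈ S → Y ∈ S) ∧
  (∀ (X : C) (n : ℤ), X ∈ S → (CategoryTheory.shiftFunctor C n).obj X ∈ S) ∧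
  (∀ T : Triangle C, T ∈ (distTriang C) → T.obj₁ ∈ S → T.obj₃ ∈ S → T.obj₂ ∈ S) ∧
  (∀ X Y : C, (∃ (i : X ⟶ Y) (r : Y ⟶ X), i ≫ r = 𝟙 X) → Y ∈ S → X ∈ S)

/-- A radical thick tensor ideal of `(C, ⊗)`: a thick subcategory `S` such that
`X ⊗ Y ∈ S` whenever `X ∈ S` or `Y ∈ S`, and such that `X ⊗ X ∈ S` implies `X ∈ S`. -/
def IsRadThickTensorIdeal (S : Set C) : Prop :=
  IsThick C S ∧
  (∀ X Y : C, X ∈ S ∨ Y ∈ S → (X ⊗ Y) ∈ S) ∧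
  (∀ X : C, (X ⊗ X) ∈ S → X ∈ S)

/-- `⟨X⟩`, the radical thick tensor ideal generated by `X`. -/
def rgen (X : C) : Set C := ⋂₀ {S : Set C | IsRadThickTensorIdeal C S ∧ X ∈ S}

set_option linter.unusedSectionVars false

section Aux

variable {C}

lemma mem_rgen_iff {X Z : C} :
    Z ∈ rgen C X ↔ ∀ S : Set C, IsRadThickTensorIdeal C S → X ∈ S → Z ∈ S := by
  constructor
  · intro h S hS hX; exact h S ⟨hS, hX⟩
  · intro h S hS; exact h S hS.1 hS.2

lemma self_mem_rgen (X : C) : X ∈ rgen C X :=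
  mem_rgen_iff.2 fun _ _ hX => hX

lemma rgen_subset {X : C} {S : Set C} (hS : IsRadThickTensorIdeal C S) (hX : X ∈ S) :
    rgen C X ⊆ S := fun _ h => h S ⟨hS, hX⟩

variable {S : Set C} in
lemma mem_of_iso (hS : IsRadThickTensorIdeal C S) {A B : C} (e : A ≅ B) (h : A ∈ S) : B ∈ S := hS.1.2.1 A B e h

variable {S : Set C} in
lemma tensor_mem_left (hS : IsRadThickTensorIdeal C S) {A : C} (h : A ∈ S) (B : C) : A ⊗ B ∈ S := hS.2.1 A B (Or.inl h)

variable {S : Set C} in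
lemma tensor_mem_right (hS : IsRadThickTensorIdeal C S) (A : C) {B : C} (h : B ∈ S) : A ⊗ B ∈ S := hS.2.1 A B (Or.inr h)

variable {S : Set C} in
lemma swap_mem (hS : IsRadThickTensorIdeal C S) {A B : C} (h : A ⊗ B ∈ S) : B ⊗ A ∈ S := by
  apply hS.2.2
  exact mem_of_iso hS (whiskerLeftIso B (α_ A B A) ≪≫ (α_ B A (B ⊗ A)).symm)
    (tensor_mem_right hS B (tensor_mem_left hS h A))

variable {S : Set C} in
lemma insert_mem (hS : IsRadThickTensorIdeal C S) {A B : C} (V : C) (h : A ⊗ B ∈ S) : (A ⊗ V) ⊗ B ∈ S := by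
  apply hS.2.2
  refine mem_of_iso hS
    (whiskerLeftIso (A ⊗ V)
      ((α_ (B ⊗ A) V B).symm ≪≫ whiskerRightIso (α_ B A V) B ≪≫ α_ B (A ⊗ V) B) ≪≫
      (α_ (A ⊗ V) B ((A ⊗ V) ⊗ B)).symm) ?_
  exact tensor_mem_right hS (A ⊗ V) (tensor_mem_left hS (swap_mem hS h) (V ⊗ B))

variable {S : Set C} in
lemma insert_mem' (hS : IsRadThickTensorIdeal C S) {A B : C} (V : C) (h : A ⊗ B ∈ S) : A ⊗ (V ⊗ B) ∈ S :=
  mem_of_iso hS (α_ A V B) (insert_mem hS V h)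

variable {S : Set C} in
lemma isZero_mem (hS : IsRadThickTensorIdeal C S) {A : C} (hA : IsZero A) : A ∈ S := hS.1.1 A hA

variable {S : Set C} in
lemma biprod_mem (hS : IsRadThickTensorIdeal C S) {A B : C} (hA : A ∈ S) (hB : B ∈ S) : (A ⊞ B) ∈ S :=
  hS.1.2.2.2.1 (binaryBiproductTriangle A B) (binaryBiproductTriangle_distinguished A B) hA hB

variable {S : Set C} in
lemma retract_mem (hS : IsRadThickTensorIdeal C S) {A B : C} (i : A ⟶ B) (r : B ⟶ A) (hir : i ≫ r = 𝟙 A) (hB : B ∈ S) :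
    A ∈ S := hS.1.2.2.2.2 A B ⟨i, r, hir⟩ hB

lemma isZero_tensor_left {A : C} (hA : IsZero A) (B : C) : IsZero (A ⊗ B) :=
  (tensorRight B).map_isZero hA

lemma isZero_tensor_right (A : C) {B : C} (hB : IsZero B) : IsZero (A ⊗ B) :=
  (tensorLeft A).map_isZero hB

lemma rightDivide_isIdeal {S : Set C} (hS : IsRadThickTensorIdeal C S) (Y : C) :
    IsRadThickTensorIdeal C {W : C | W ⊗ Y ∈ S} := by
  refine ⟨⟨?_, ?_, ?_, ?_, ?_⟩, ?_, ?_⟩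
  · intro W hW
    exact isZero_mem hS (isZero_tensor_left hW Y)
  · intro W₁ W₂ e h
    exact mem_of_iso hS (whiskerRightIso e Y) h
  · intro W n h
    exact mem_of_iso hS ((((tensorRight Y).commShiftIso n).app W).symm)
      (hS.1.2.2.1 (W ⊗ Y) n h)
  · intro T hT h1 h3
    exact hS.1.2.2.2.1 ((tensorRight Y).mapTriangle.obj T)
      ((tensorRight Y).map_distinguished T hT) h1 h3
  · intro W₁ W₂ ⟨i, r, hir⟩ h
    exact retract_mem hS (i ▷ Y) (r ▷ Y)
      (by rw [← comp_whiskerRight, hir, id_whiskerRight]) h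
  · rintro W₁ W₂ (h | h)
    · exact insert_mem hS W₂ h
    · exact mem_of_iso hS (α_ W₁ W₂ Y).symm (tensor_mem_right hS W₁ h)
  · intro W h
    have h1 : (W ⊗ Y) ⊗ W ∈ S := swap_mem hS (mem_of_iso hS (α_ W W Y) h)
    have h2 : ((W ⊗ Y) ⊗ W) ⊗ Y ∈ S := tensor_mem_left hS h1 Y
    exact hS.2.2 (W ⊗ Y) (mem_of_iso hS (α_ (W ⊗ Y) W Y) h2)

lemma leftDivide_isIdeal {S : Set C} (hS : IsRadThickTensorIdeal C S) (Z : C) :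
    IsRadThickTensorIdeal C {W : C | Z ⊗ W ∈ S} := by
  refine ⟨⟨?_, ?_, ?_, ?_, ?_⟩, ?_, ?_⟩
  · intro W hW
    exact isZero_mem hS (isZero_tensor_right Z hW)
  · intro W₁ W₂ e h
    exact mem_of_iso hS (whiskerLeftIso Z e) h
  · intro W n h
    exact mem_of_iso hS ((((tensorLeft Z).commShiftIso n).app W).symm)
      (hS.1.2.2.1 (Z ⊗ W) n h)
  · intro T hT h1 h3
    exact hS.1.2.2.2.1 ((tensorLeft Z).mapTriangle.obj T)
      ((tensorLeft Z).map_distinguished T hT) h1 h3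
  · intro W₁ W₂ ⟨i, r, hir⟩ h
    exact retract_mem hS (Z ◁ i) (Z ◁ r)
      (by rw [← MonoidalCategory.whiskerLeft_comp, hir, MonoidalCategory.whiskerLeft_id]) h
  · rintro W₁ W₂ (h | h)
    · exact mem_of_iso hS (α_ Z W₁ W₂) (tensor_mem_left hS h W₂)
    · exact insert_mem' hS W₁ h
  · intro W h
    have h1 : (Z ⊗ W) ⊗ W ∈ S := mem_of_iso hS (α_ Z W W).symm h
    exact hS.2.2 (Z ⊗ W) (mem_of_iso hS (α_ (Z ⊗ W) Z W) (insert_mem hS Z h1))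

lemma rgen_isIdeal (X : C) : IsRadThickTensorIdeal C (rgen C X) := by
  refine ⟨⟨?_, ?_, ?_, ?_, ?_⟩, ?_, ?_⟩
  · intro W hW
    exact mem_rgen_iff.2 fun S hS _ => isZero_mem hS hW
  · intro W₁ W₂ e h
    exact mem_rgen_iff.2 fun S hS hX => mem_of_iso hS e (mem_rgen_iff.1 h S hS hX)
  · intro W n h
    exact mem_rgen_iff.2 fun S hS hX => hS.1.2.2.1 W n (mem_rgen_iff.1 h S hS hX)
  · intro T hT h1 h3
    exact mem_rgen_iff.2 fun S hS hX =>
      hS.1.2.2.2.1 T hT (mem_rgen_iff.1 h1 S hS hX) (mem_rgen_iff.1 h3 S hS hX)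
  · intro W₁ W₂ hretract h
    exact mem_rgen_iff.2 fun S hS hX =>
      hS.1.2.2.2.2 W₁ W₂ hretract (mem_rgen_iff.1 h S hS hX)
  · intro W₁ W₂ h
    refine mem_rgen_iff.2 fun S hS hX => hS.2.1 W₁ W₂ ?_
    rcases h with h | h
    · exact Or.inl (mem_rgen_iff.1 h S hS hX)
    · exact Or.inr (mem_rgen_iff.1 h S hS hX)
  · intro W h
    exact mem_rgen_iff.2 fun S hS hX => hS.2.2 W (mem_rgen_iff.1 h S hS hX)

lemma rgen_mono {X Y : C} (h : X ∈ rgen C Y) : rgen C X ⊆ rgen C Y :=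
  rgen_subset (rgen_isIdeal Y) h

lemma meet_mem {X Y Z : C} (hX : Z ∈ rgen C X) (hY : Z ∈ rgen C Y) :
    Z ∈ rgen C (X ⊗ Y) := by
  refine mem_rgen_iff.2 fun S hS hXY => ?_
  have h1 : Z ⊗ Y ∈ S :=
    mem_rgen_iff.1 hX {W : C | W ⊗ Y ∈ S} (rightDivide_isIdeal hS Y) hXY
  have h2 : Z ⊗ Z ∈ S :=
    mem_rgen_iff.1 hY {W : C | Z ⊗ W ∈ S} (leftDivide_isIdeal hS Z) h1
  exact hS.2.2 Z h2

end Aux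

/-- `L(T,⊗)` is a bounded distributive lattice, with order `⟨X⟩ ⊆ ⟨Y⟩`,
bottom the class of zero objects, top the class of the tensor unit,
join `⟨X ⊞ Y⟩` and meet `⟨X ⊗ Y⟩`. -/
theorem stmt17 :
    -- the class of a zero object is the bottom element
    (∀ (X Z : C), IsZero Z → rgen C Z ⊆ rgen C X) ∧
    -- the class of the tensor unit is the top element
    (∀ X : C, rgen C X ⊆ rgen C (𝟙_ C)) ∧
    -- `⟨X ⊞ Y⟩` is the least upper bound of `⟨X⟩` and `⟨Y⟩`
    (∀ X Y : C, rgen C X ⊆ rgen C (X ⊞ Y) ∧ rgen C Y ⊆ rgen C (X ⊞ Y)) ∧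
    (∀ X Y Z : C, rgen C X ⊆ rgen C Z → rgen C Y ⊆ rgen C Z →
      rgen C (X ⊞ Y) ⊆ rgen C Z) ∧
    -- `⟨X ⊗ Y⟩` is the greatest lower bound of `⟨X⟩` and `⟨Y⟩`
    (∀ X Y : C, rgen C (X ⊗ Y) = rgen C X ∩ rgen C Y) ∧
    -- distributivity: `⟨X⟩ ∧ (⟨Y⟩ ∨ ⟨Z⟩) ≤ (⟨X⟩ ∧ ⟨Y⟩) ∨ (⟨X⟩ ∧ ⟨Z⟩)`
    (∀ X Y Z : C, rgen C X ∩ rgen C (Y ⊞ Z) ⊆ rgen C ((X ⊗ Y) ⊞ (X ⊗ Z))) := by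
  refine ⟨?_, ?_, ?_, ?_, ?_, ?_⟩
  · intro X Z hZ
    exact rgen_mono (mem_rgen_iff.2 fun S hS _ => isZero_mem hS hZ)
  · intro X
    exact rgen_mono (mem_rgen_iff.2 fun S hS h1 =>
      mem_of_iso hS (ρ_ X) (tensor_mem_right hS X h1))
  · intro X Y
    constructor
    · exact rgen_mono (mem_rgen_iff.2 fun S hS h =>
        retract_mem hS biprod.inl biprod.fst biprod.inl_fst h)
    · exact rgen_mono (mem_rgen_iff.2 fun S hS h =>
        retract_mem hS biprod.inr biprod.snd biprod.inr_snd h)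
  · intro X Y Z hX hY
    exact rgen_mono (biprod_mem (rgen_isIdeal Z) (hX (self_mem_rgen X)) (hY (self_mem_rgen Y)))
  · intro X Y
    apply Set.Subset.antisymm
    · intro W hW
      constructor
      · exact rgen_mono (tensor_mem_left (rgen_isIdeal X) (self_mem_rgen X) Y) hW
      · exact rgen_mono (tensor_mem_right (rgen_isIdeal Y) X (self_mem_rgen Y)) hW
    · rintro W ⟨hWX, hWY⟩
      exact meet_mem hWX hWY
  · intro X Y Z
    rintro W ⟨hWX, hWYZ⟩
    have hW : W ∈ rgen C (X ⊗ (Y ⊞ Z)) := meet_mem hWX hWYZ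
    refine rgen_mono (mem_rgen_iff.2 fun S hS h => ?_) hW
    have hXY : X ⊗ Y ∈ S :=
      retract_mem hS biprod.inl biprod.fst biprod.inl_fst h
    have hXZ : X ⊗ Z ∈ S :=
      retract_mem hS biprod.inr biprod.snd biprod.inr_snd h
    exact hS.1.2.2.2.1 ((tensorLeft X).mapTriangle.obj (binaryBiproductTriangle Y Z))
      ((tensorLeft X).map_distinguished _ (binaryBiproductTriangle_distinguished Y Z)) hXY hXZ
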